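/- arXiv:1906.04549 — 2 statements merged into one kernel-verified Lean document; each statement's English description precedes it below -/
import Mathlib

section
/- Let L be a Lie algebra over a field F, T ⊆ L an abelian subalgebra, and suppose L decomposes as a direct sum of weight spaces L = ⊕_μ L_μ with respect to T, where L_μ = {x ∈ L : [t,x] = μ(t)x for all t ∈ T}. Let φ be a skew-symmetric biderivation of L with φ(t,t') = 0 for all t, t' ∈ T. Then for every t ∈ T and every weight vector x ∈ L_μ, one has [s, φ(t,x)] = μ(s) φ(t,x) for all s ∈ T; that is, φ(t,x) ∈ L_μ. -/
/-- The weight space of a linear functional `μ` on an abelian subalgebra `T` of `L`. -/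
def wtSpace (F L : Type*) [Field F] [LieRing L] [LieAlgebra F L]
    (T : LieSubalgebra F L) (μ : T → F) : Submodule F L where
  carrier := {x | ∀ t : T, ⁅(t : L), x⁆ = μ t • x}
  add_mem' := by
    intro a b ha hb t
    rw [lie_add, ha t, hb t, smul_add]
  zero_mem' := by intro t; simp
  smul_mem' := by
    intro c a ha t
    rw [lie_smul, ha t, smul_comm]

/-- If `φ` is a skew-symmetric biderivation vanishing on `T × T`, and `x` is a weight
vector of weight `μ` for the abelian subalgebra `T`, then so is `φ(t,x)` for every `t ∈ T`. -/
theorem skew_biderivation_weight (F L : Type*) [Field F] [LieRing L] [LieAlgebra F L]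
    (T : LieSubalgebra F L)
    (hab : ∀ t t' : T, ⁅(t : L), (t' : L)⁆ = 0)
    (hdec : (⨆ μ : T → F, wtSpace F L T μ) = ⊤)
    (hind : iSupIndep (wtSpace F L T))
    (φ : L →ₗ[F] L →ₗ[F] L)
    (hskew : ∀ x y : L, φ x y = - φ y x)
    (hl : ∀ x y z : L, φ ⁅x, y⁆ z = ⁅x, φ y z⁆ + ⁅φ x z, y⁆)
    (hr : ∀ x y z : L, φ x ⁅y, z⁆ = ⁅φ x y, z⁆ + ⁅y, φ x z⁆)
    (hφT : ∀ t t' : T, φ (t : L) (t' : L) = 0)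
    (μ : T → F) (x : L) (hx : x ∈ wtSpace F L T μ) :
    ∀ t : T, φ (t : L) x ∈ wtSpace F L T μ := by
  intro t s
  have h := hr (t : L) (s : L) x
  rw [hx s, map_smul, hφT t s, zero_lie, zero_add] at h
  exact h.symm
end

section
/- Let L be a Lie algebra over a field F with trivial center, generated as a Lie algebra by a subset S. Let φ, ψ be two skew-symmetric biderivations of L such that φ(s, x) = ψ(s, x) for all s ∈ S and all x ∈ L. Then φ = ψ. -/
/-- Two skew-symmetric biderivations of a centerless Lie algebra generated by `S`
that agree on `S × L` are equal. -/
theorem skew_biderivation_ext (F L : Type*) [Field F] [LieRing L] [LieAlgebra F L]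
    (hcent : LieAlgebra.center F L = ⊥)
    (S : Set L) (hgen : LieSubalgebra.lieSpan F L S = ⊤)
    (φ ψ : L →ₗ[F] L →ₗ[F] L)
    (hφskew : ∀ x y : L, φ x y = - φ y x)
    (hφl : ∀ x y z : L, φ ⁅x, y⁆ z = ⁅x, φ y z⁆ + ⁅φ x z, y⁆)
    (hφr : ∀ x y z : L, φ x ⁅y, z⁆ = ⁅φ x y, z⁆ + ⁅y, φ x z⁆)
    (hψskew : ∀ x y : L, ψ x y = - ψ y x)
    (hψl : ∀ x y z : L, ψ ⁅x, y⁆ z = ⁅x, ψ y z⁆ + ⁅ψ x z, y⁆)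
    (hψr : ∀ x y z : L, ψ x ⁅y, z⁆ = ⁅ψ x y, z⁆ + ⁅y, ψ x z⁆)
    (hagree : ∀ s ∈ S, ∀ x : L, φ s x = ψ s x) :
    φ = ψ := by
  let T : LieSubalgebra F L :=
    { carrier := {x | ∀ y, φ x y = ψ x y}
      add_mem' := fun {a b} ha hb y => by simp [ha y, hb y]
      zero_mem' := fun y => by simp
      smul_mem' := fun c a ha y => by simp [ha y]
      lie_mem' := fun {a b} ha hb z => by
        rw [hφl, hψl, ha z, hb z] }
  have hS : S ⊆ T := fun s hs y => hagree s hs y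
  have htop : (⊤ : LieSubalgebra F L) ≤ T := hgen ▸ LieSubalgebra.lieSpan_le.mpr hS
  ext x y
  exact htop (LieSubalgebra.mem_top x) y
end
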